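/- For every t ≥ 0, almost surely, P[M*_∞ = M*_t | 𝓕_t] = 1 − M_t / M*_t. In other words, the conditional law of the overall maximum M*_∞ given 𝓕_t has an atom at the current running maximum M*_t of mass 1 − M_t/M*_t. (Consequently the conditional law of M*_∞ given 𝓕_t is not absolutely continuous with respect to its unconditional law, so Jacod's criterion fails for the initial enlargement by M*_∞.) -/

import Mathlib

/-!
Fix `t` and write `S = M*_t`. For an `ℱ_t`-measurable level `X > M_t` the process
`N_u = M_{t+u} / X` is a continuous nonnegative martingale for the filtration `ℱ_{t+·}`, starts
below `1` and tends to `0`. Stopping it when it first reaches `1` (optional sampling, which for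
continuous martingales follows from the countably-valued case by dyadic approximation of the
stopping time) shows that `N` reaches `1` with conditional probability `N_0 = M_t / X`, by
continuity without overshoot. Taking `X = S + ε` and letting `ε ↓ 0` gives
`P[∃ s, M_s > S | ℱ_t] = M_t / S`, and since the paths are a.s. bounded, `{M*_∞ = S}` is a.s.
the complement of that event.
-/

open MeasureTheory Filter Set Topology
open scoped NNReal

namespace NNReal

noncomputable def dyadicCeil (k : ℕ) (s : ℝ≥0) : ℝ≥0 := ⌈s * 2 ^ k⌉₊ / 2 ^ k

variable {k : ℕ} {s v : ℝ≥0}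

lemma le_dyadicCeil : s ≤ dyadicCeil k s := by
  rw [dyadicCeil, le_div_iff₀ (by positivity)]
  exact Nat.le_ceil _

lemma dyadicCeil_le_add : dyadicCeil k s ≤ s + 1 / 2 ^ k := by
  rw [dyadicCeil, div_le_iff₀ (by positivity), add_mul, one_div_mul_cancel (by positivity)]
  exact (Nat.ceil_lt_add_one zero_le).le

lemma dyadicCeil_le_iff : dyadicCeil k s ≤ v ↔ s ≤ ⌊v * 2 ^ k⌋₊ / 2 ^ k := by
  rw [dyadicCeil, div_le_iff₀ (by positivity), le_div_iff₀ (by positivity),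
    ← Nat.le_floor_iff zero_le, Nat.ceil_le]

lemma tendsto_dyadicCeil (s : ℝ≥0) : Tendsto (fun k => dyadicCeil k s) atTop (𝓝 s) := by
  refine tendsto_of_tendsto_of_tendsto_of_le_of_le tendsto_const_nhds ?_
    (fun _ => le_dyadicCeil) (fun _ => dyadicCeil_le_add)
  have : Tendsto (fun k : ℕ => (1 : ℝ≥0) / 2 ^ k) atTop (𝓝 0) := by
    simpa only [one_div, inv_pow] using
      NNReal.tendsto_pow_atTop_nhds_zero_of_lt_one (r := 2⁻¹) (by norm_num)
  simpa using tendsto_const_nhds.add this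

lemma countable_range_dyadicCeil (k : ℕ) : (range (dyadicCeil k)).Countable :=
  (countable_range fun n : ℕ => (n : ℝ≥0) / 2 ^ k).mono
    (range_comp_subset_range (fun s => ⌈s * 2 ^ k⌉₊) fun n : ℕ => (n : ℝ≥0) / 2 ^ k)

end NNReal

section RunningMax

variable {f : ℝ≥0 → ℝ}

-- In `ℝ` an empty supremum is `sSup ∅ = 0`, so `⨆ s ∈ Icc a b, f s` is the maximum of `f` on
-- `[a, b]` only because `f` is nonnegative.
lemma biSup_Icc_eq_sSup_image (hf : Continuous f) (hf0 : ∀ s, 0 ≤ f s) (a b : ℝ≥0) :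
    ⨆ s ∈ Icc a b, f s = sSup (f '' Icc a b) := by
  refine (csSup_image ?_ ?_).symm
  · rw [← image_eq_range]
    exact (isCompact_Icc.image hf).bddAbove
  · rw [Real.sSup_empty]
    exact Real.iSup_nonneg fun s => hf0 s

lemma le_biSup_Icc (hf : Continuous f) (hf0 : ∀ s, 0 ≤ f s) {a b s : ℝ≥0} (hs : s ∈ Icc a b) :
    f s ≤ ⨆ s ∈ Icc a b, f s := by
  rw [biSup_Icc_eq_sSup_image hf hf0]
  exact le_csSup (isCompact_Icc.image hf).bddAbove (mem_image_of_mem f hs)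

lemma exists_le_iff_le_biSup_Icc (hf : Continuous f) (hf0 : ∀ s, 0 ≤ f s) {a b : ℝ≥0}
    (hab : a ≤ b) {x : ℝ} : (∃ s ∈ Icc a b, x ≤ f s) ↔ x ≤ ⨆ s ∈ Icc a b, f s := by
  refine ⟨fun ⟨s, hs, hxs⟩ => hxs.trans (le_biSup_Icc hf hf0 hs), fun hx => ?_⟩
  rw [biSup_Icc_eq_sSup_image hf hf0] at hx
  obtain ⟨s, hs, hfs⟩ := (isCompact_Icc.image hf).sSup_mem ((nonempty_Icc.2 hab).image f)
  exact ⟨s, hs, hfs ▸ hx⟩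

lemma biSup_Icc_le_iSup (hf0 : ∀ s, 0 ≤ f s) (hf : BddAbove (range f)) (a b : ℝ≥0) :
    ⨆ s ∈ Icc a b, f s ≤ ⨆ s, f s :=
  Real.iSup_le (fun s => Real.iSup_le (fun _ => le_ciSup hf s) (Real.iSup_nonneg hf0))
    (Real.iSup_nonneg hf0)

lemma Continuous.bddAbove_range_of_tendsto_atTop (hf : Continuous f) {l : ℝ}
    (h : Tendsto f atTop (𝓝 l)) : BddAbove (range f) := by
  obtain ⟨q, hq⟩ := eventually_atTop.1 (h.eventually (eventually_le_nhds (lt_add_one l)))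
  refine ((isCompact_Icc (a := 0) (b := q).image hf).bddAbove.union
    (bddAbove_Iic (a := l + 1))).mono ?_
  rintro _ ⟨s, rfl⟩
  rcases le_total s q with hs | hs
  · exact Or.inl (mem_image_of_mem f ⟨zero_le, hs⟩)
  · exact Or.inr (hq s hs)

lemma iSup_eq_biSup_Icc_iff (hf0 : ∀ s, 0 ≤ f s) (hf : BddAbove (range f))
    (a b : ℝ≥0) : (⨆ s, f s) = ⨆ s ∈ Icc a b, f s ↔ ∀ s, f s ≤ ⨆ r ∈ Icc a b, f r :=
  ⟨fun h s => h ▸ le_ciSup hf s, fun h => le_antisymm (ciSup_le h) (biSup_Icc_le_iSup hf0 hf a b)⟩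

end RunningMax

section Hitting

variable {Ω ι β : Type*} [ConditionallyCompleteLinearOrder ι] [TopologicalSpace ι] [OrderTopology ι]
  [TopologicalSpace β] {u : ι → Ω → β} {s : Set β} {n m : ι} {ω : Ω}

lemma apply_hittingBtwn_mem_of_isClosed (hs : IsClosed s) (hu : Continuous fun t => u t ω)
    (h : ∃ j ∈ Icc n m, u j ω ∈ s) : u (hittingBtwn u s n m ω) ω ∈ s := by
  obtain ⟨j, hj, hjs⟩ := h
  rw [hittingBtwn, if_pos ⟨j, hj, hjs⟩]
  exact ((isClosed_Icc.inter (hs.preimage hu)).csInf_mem ⟨j, hj, hjs⟩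
    bddBelow_Icc.inter_of_left).2

lemma hittingBtwn_le_iff_of_isClosed (hs : IsClosed s) (hu : Continuous fun t => u t ω) {v : ι}
    (hvm : v < m) : hittingBtwn u s n m ω ≤ v ↔ ∃ j ∈ Icc n v, u j ω ∈ s := by
  refine ⟨fun hv => ?_, fun ⟨j, hj, hjs⟩ =>
    (hittingBtwn_le_of_mem hj.1 (hj.2.trans hvm.le) hjs).trans hj.2⟩
  have h : ∃ j ∈ Icc n m, u j ω ∈ s := by
    by_contra h
    rw [hittingBtwn, if_neg h] at hv
    exact hvm.not_ge hv
  have hnm : n ≤ m := by obtain ⟨j, hj, -⟩ := h; exact hj.1.trans hj.2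
  exact ⟨_, ⟨le_hittingBtwn hnm ω, hv⟩, apply_hittingBtwn_mem_of_isClosed hs hu h⟩

variable [DenselyOrdered ι] {f : ι → Ω → ℝ} {x : ℝ}

lemma apply_hittingBtwn_Ici_eq (hf : Continuous fun t => f t ω) (hn : f n ω ≤ x)
    (h : ∃ j ∈ Icc n m, x ≤ f j ω) : f (hittingBtwn f (Ici x) n m ω) ω = x := by
  set τ := hittingBtwn f (Ici x) n m ω
  have hnm : n ≤ m := by obtain ⟨j, hj, -⟩ := h; exact hj.1.trans hj.2
  have hτ : τ ∈ Icc n m := hittingBtwn_mem_Icc hnm ω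
  have hxτ : x ≤ f τ ω := apply_hittingBtwn_mem_of_isClosed isClosed_Ici hf h
  obtain ⟨r, hr, hfr⟩ := intermediate_value_Icc hτ.1 hf.continuousOn ⟨hn, hxτ⟩
  have hτr : τ ≤ r := hittingBtwn_le_of_mem hr.1 (hr.2.trans hτ.2) hfr.ge
  rwa [← le_antisymm hr.2 hτr]

lemma apply_hittingBtwn_Ici_le (hf : Continuous fun t => f t ω) (hnm : n ≤ m) (hn : f n ω ≤ x) :
    f (hittingBtwn f (Ici x) n m ω) ω ≤ x := by
  by_cases h : ∃ j ∈ Icc n m, x ≤ f j ω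
  · exact (apply_hittingBtwn_Ici_eq hf hn h).le
  · rw [hittingBtwn, if_neg (by simpa only [mem_Ici] using h)]
    push Not at h
    exact (h m ⟨hnm, le_rfl⟩).le

end Hitting

lemma tendsto_apply_hittingBtwn_Ici {Ω : Type*} {f : ℝ≥0 → Ω → ℝ} {ω : Ω} {x : ℝ}
    (hf : Continuous fun t => f t ω) (h0 : f 0 ω ≤ x)
    (hlim : Tendsto (fun t => f t ω) atTop (𝓝 0)) :
    Tendsto (fun n : ℕ => f (hittingBtwn f (Ici x) 0 n ω) ω) atTop
      (𝓝 ({ω | ∃ s, x ≤ f s ω}.indicator (fun _ => x) ω)) := by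
  by_cases hC : ∃ s, x ≤ f s ω
  · rw [indicator_of_mem (show ω ∈ {ω | ∃ s, x ≤ f s ω} from hC)]
    obtain ⟨s, hs⟩ := hC
    refine tendsto_const_nhds.congr' ?_
    filter_upwards [eventually_ge_atTop ⌈s⌉₊] with n hn
    exact (apply_hittingBtwn_Ici_eq hf h0 ⟨s, ⟨zero_le, Nat.ceil_le.1 hn⟩, hs⟩).symm
  · rw [indicator_of_notMem (show ω ∉ {ω | ∃ s, x ≤ f s ω} from hC)]
    refine (hlim.comp tendsto_natCast_atTop_atTop).congr fun n => ?_
    rw [Function.comp_apply, hittingBtwn, if_neg fun ⟨s, _, hs⟩ => hC ⟨s, hs⟩]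

namespace MeasureTheory

def Filtration.shift {Ω : Type*} {m : MeasurableSpace Ω} (𝒢 : Filtration ℝ≥0 m) (t : ℝ≥0) :
    Filtration ℝ≥0 m where
  seq u := 𝒢 (t + u)
  mono' _ _ h := 𝒢.mono (add_le_add le_rfl h)
  le' u := 𝒢.le (t + u)

@[simp]
lemma Filtration.shift_zero {Ω : Type*} {m : MeasurableSpace Ω} (𝒢 : Filtration ℝ≥0 m)
    (t : ℝ≥0) : 𝒢.shift t 0 = 𝒢 t := by
  simp [Filtration.shift]

section Measurability

variable {Ω : Type*} {m : MeasurableSpace Ω} {𝒢 : Filtration ℝ≥0 m} {N : ℝ≥0 → Ω → ℝ}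

lemma StronglyAdapted.measurable_biSup_Icc (hN : StronglyAdapted 𝒢 N)
    (hcont : ∀ ω, Continuous fun s => N s ω) (hnonneg : ∀ s ω, 0 ≤ N s ω) (a b : ℝ≥0) :
    Measurable[𝒢 b] fun ω => ⨆ s ∈ Icc a b, N s ω := by
  obtain ⟨D, hDc, hD⟩ := TopologicalSpace.exists_countable_dense (Icc a b)
  have : Countable D := hDc.to_subtype
  have hsup : ∀ ω, ⨆ s ∈ Icc a b, N s ω = ⨆ d : D, N d ω := fun ω => by
    rw [hD.ciSup' (f := fun s : Icc a b => N s ω) ((hcont ω).comp continuous_subtype_val)]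
    refine (ciSup_subtype_fun (f := fun s => N s ω) ?_ ?_).symm
    · exact (isCompact_Icc.image (hcont ω)).bddAbove.mono
        (range_subset_iff.2 fun s => mem_image_of_mem _ s.2)
    · rw [Real.sSup_empty]
      exact Real.iSup_nonneg fun s => hnonneg s ω
  simp_rw [hsup]
  exact Measurable.iSup fun d => (hN d).measurable.mono (𝒢.mono d.1.2.2) le_rfl

lemma StronglyAdapted.measurableSet_exists_mem_Icc_le (hN : StronglyAdapted 𝒢 N)
    (hcont : ∀ ω, Continuous fun s => N s ω) (hnonneg : ∀ s ω, 0 ≤ N s ω) {a b : ℝ≥0}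
    (hab : a ≤ b) (x : ℝ) : MeasurableSet[𝒢 b] {ω | ∃ s ∈ Icc a b, x ≤ N s ω} := by
  simp_rw [exists_le_iff_le_biSup_Icc (hcont _) (hnonneg · _) hab]
  exact measurableSet_le measurable_const (hN.measurable_biSup_Icc hcont hnonneg a b)

lemma StronglyAdapted.measurableSet_exists_le (hN : StronglyAdapted 𝒢 N)
    (hcont : ∀ ω, Continuous fun s => N s ω) (hnonneg : ∀ s ω, 0 ≤ N s ω) (x : ℝ) :
    MeasurableSet {ω | ∃ s, x ≤ N s ω} := by
  have hset : {ω | ∃ s, x ≤ N s ω} = ⋃ n : ℕ, {ω | ∃ s ∈ Icc 0 (n : ℝ≥0), x ≤ N s ω} := by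
    ext ω
    simp only [mem_ofPred_eq, mem_iUnion]
    exact ⟨fun ⟨s, hs⟩ => ⟨⌈s⌉₊, s, ⟨zero_le, Nat.le_ceil s⟩, hs⟩, fun ⟨_, s, _, hs⟩ => ⟨s, hs⟩⟩
  rw [hset]
  exact .iUnion fun n => 𝒢.le n _ (hN.measurableSet_exists_mem_Icc_le hcont hnonneg zero_le x)

lemma StronglyAdapted.isStoppingTime_hittingBtwn_Ici (hN : StronglyAdapted 𝒢 N)
    (hcont : ∀ ω, Continuous fun s => N s ω) (hnonneg : ∀ s ω, 0 ≤ N s ω) (x : ℝ) (T : ℝ≥0) :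
    IsStoppingTime 𝒢 fun ω => ((hittingBtwn N (Ici x) 0 T ω : ℝ≥0) : WithTop ℝ≥0) := by
  intro v
  simp only [WithTop.coe_le_coe]
  rcases lt_or_ge v T with hvT | hTv
  · simp_rw [hittingBtwn_le_iff_of_isClosed isClosed_Ici (hcont _) hvT, mem_Ici]
    exact hN.measurableSet_exists_mem_Icc_le hcont hnonneg zero_le x
  · simp [(hittingBtwn_le _).trans hTv]

lemma measurableSet_exists_lt_of_continuous {Y : Ω → ℝ} (hY : Measurable Y)
    (hN : ∀ s, Measurable (N s)) (hcont : ∀ ω, Continuous fun s => N s ω) :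
    MeasurableSet {ω | ∃ s, Y ω < N s ω} := by
  obtain ⟨D, hDc, hD⟩ := TopologicalSpace.exists_countable_dense ℝ≥0
  have hset : {ω | ∃ s, Y ω < N s ω} = ⋃ d ∈ D, {ω | Y ω < N d ω} := by
    ext ω
    simp only [mem_ofPred_eq, mem_iUnion, exists_prop]
    refine ⟨fun ⟨s, hs⟩ => ?_, fun ⟨d, _, hd⟩ => ⟨d, hd⟩⟩
    exact hD.exists_mem_open (isOpen_lt continuous_const (hcont ω)) ⟨s, hs⟩
  rw [hset]
  exact MeasurableSet.biUnion hDc fun d _ => measurableSet_lt hY (hN d)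

end Measurability

namespace IsStoppingTime

variable {Ω : Type*} {m : MeasurableSpace Ω} {𝒢 : Filtration ℝ≥0 m} {σ : Ω → ℝ≥0}

lemma dyadicCeil (hσ : IsStoppingTime 𝒢 fun ω => (σ ω : WithTop ℝ≥0)) (k : ℕ) :
    IsStoppingTime 𝒢 fun ω => (NNReal.dyadicCeil k (σ ω) : WithTop ℝ≥0) := by
  intro v
  simp only [WithTop.coe_le_coe, NNReal.dyadicCeil_le_iff]
  have hv : (⌊v * 2 ^ k⌋₊ : ℝ≥0) / 2 ^ k ≤ v := by
    rw [div_le_iff₀ (by positivity)]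
    exact Nat.floor_le zero_le
  simpa only [WithTop.coe_le_coe] using 𝒢.mono hv _ (hσ ((⌊v * 2 ^ k⌋₊ : ℝ≥0) / 2 ^ k))

end IsStoppingTime

lemma condExp_indicator_ae_eq_of_measureReal_inter {Ω : Type*} {m m₀ : MeasurableSpace Ω}
    {P : Measure Ω} [IsFiniteMeasure P] (hm : m ≤ m₀) {D : Set Ω} (hD : MeasurableSet[m₀] D)
    {g : Ω → ℝ} (hg : StronglyMeasurable[m] g) (hgP : Integrable g P)
    (h : ∀ B, MeasurableSet[m] B → P.real (D ∩ B) = ∫ ω in B, g ω ∂P) :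
    P[D.indicator fun _ => (1 : ℝ) | m] =ᵐ[P] g := by
  refine (ae_eq_condExp_of_forall_setIntegral_eq hm ((integrable_const 1).indicator hD)
    (fun B _ _ => hgP.integrableOn) (fun B hB _ => ?_) hg.aestronglyMeasurable).symm
  rw [integral_indicator_const _ hD, measureReal_restrict_apply hD, smul_eq_mul, mul_one, h B hB]

lemma tendsto_setIntegral_div_add_one_div {Ω : Type*} {m : MeasurableSpace Ω} {P : Measure Ω}
    [IsFiniteMeasure P] {f g : Ω → ℝ} (hf : Measurable f) (hg : Measurable g)
    (hf0 : ∀ ω, 0 ≤ f ω) (hfg : ∀ ω, f ω ≤ g ω) (B : Set Ω) :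
    Tendsto (fun k : ℕ => ∫ ω in B, f ω / (g ω + 1 / (k + 1)) ∂P) atTop
      (𝓝 (∫ ω in B, f ω / g ω ∂P)) := by
  have hpos : ∀ (k : ℕ) ω, 0 < g ω + 1 / (k + 1) := fun k ω =>
    add_pos_of_nonneg_of_pos ((hf0 ω).trans (hfg ω)) Nat.one_div_pos_of_nat
  refine tendsto_integral_of_dominated_convergence (fun _ => 1)
    (fun k => (hf.div (hg.add_const _)).aestronglyMeasurable) (integrable_const 1)
    (fun k => ae_of_all _ fun ω => ?_) (ae_of_all _ fun ω => ?_)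
  · rw [Real.norm_of_nonneg (div_nonneg (hf0 ω) (hpos k ω).le)]
    exact div_le_one_of_le₀ ((hfg ω).trans (le_add_of_nonneg_right Nat.one_div_pos_of_nat.le))
      (hpos k ω).le
  · rcases (hf0 ω).trans (hfg ω) |>.eq_or_lt with hg0 | hg0
    · simp [le_antisymm (hg0 ▸ hfg ω) (hf0 ω)]
    · have hgk : Tendsto (fun k : ℕ => g ω + 1 / (k + 1)) atTop (𝓝 (g ω)) := by
        simpa only [add_zero] using
          (tendsto_const_nhds (x := g ω)).add tendsto_one_div_add_atTop_nhds_zero_nat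
      exact tendsto_const_nhds.div hgk hg0.ne'

namespace Martingale

section

variable {Ω : Type*} {m : MeasurableSpace Ω} {P : Measure Ω} {𝒢 : Filtration ℝ≥0 m}
  {N : ℝ≥0 → Ω → ℝ}

lemma shift (hN : Martingale N 𝒢 P) (t : ℝ≥0) :
    Martingale (fun u => N (t + u)) (𝒢.shift t) P :=
  ⟨fun u => hN.1 (t + u), fun _ _ h => hN.2 _ _ (add_le_add le_rfl h)⟩

lemma mul_left_of_bounded (hN : Martingale N 𝒢 P) {Y : Ω → ℝ} (hY : StronglyMeasurable[𝒢 0] Y)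
    {C : ℝ} (hYC : ∀ ω, ‖Y ω‖ ≤ C) : Martingale (fun u ω => Y ω * N u ω) 𝒢 P := by
  have hY' : ∀ u, StronglyMeasurable[𝒢 u] Y := fun u => hY.mono (𝒢.mono zero_le)
  refine ⟨fun u => (hY' u).mul (hN.1 u), fun u v huv => ?_⟩
  have hYN : Integrable (fun ω => Y ω * N v ω) P :=
    (hN.integrable v).bdd_mul ((hY' 0).mono (𝒢.le 0)).aestronglyMeasurable
      (Eventually.of_forall hYC)
  exact (condExp_mul_of_stronglyMeasurable_left (hY' u) hYN (hN.integrable v)).trans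
    (EventuallyEq.rfl.mul (hN.2 u v huv))

variable [IsFiniteMeasure P]

theorem setIntegral_stoppedValue_eq_of_continuous (hN : Martingale N 𝒢 P)
    (hcont : ∀ ω, Continuous fun s => N s ω) {σ : Ω → ℝ≥0}
    (hσ : IsStoppingTime 𝒢 fun ω => (σ ω : WithTop ℝ≥0)) {T : ℝ≥0} (hσT : ∀ ω, σ ω ≤ T)
    {B : Set Ω} (hB : MeasurableSet[hσ.measurableSpace] B) :
    ∫ ω in B, N (σ ω) ω ∂P = ∫ ω in B, N T ω ∂P := by
  set τ : ℕ → Ω → ℝ≥0 := fun k ω => NNReal.dyadicCeil k (σ ω)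
  have hτ : ∀ k, IsStoppingTime 𝒢 fun ω => (τ k ω : WithTop ℝ≥0) := hσ.dyadicCeil
  have hτT : ∀ k ω, (τ k ω : WithTop ℝ≥0) ≤ ((T + 1 : ℝ≥0) : WithTop ℝ≥0) := fun k ω =>
    WithTop.coe_le_coe.2 <| NNReal.dyadicCeil_le_add.trans <|
      add_le_add (hσT ω) (div_le_self zero_le (one_le_pow₀ one_le_two))
  set G : ℕ → Ω → ℝ := fun k => P[N (T + 1) | (hτ k).measurableSpace]
  have hNτ : ∀ k, (fun ω => N (τ k ω) ω) =ᵐ[P] G k := fun k =>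
    hN.stoppedValue_ae_eq_condExp_of_le_const_of_countable_range (hτ k) (hτT k)
      (((NNReal.countable_range_dyadicCeil k).image _).mono <| by
        rintro _ ⟨ω, rfl⟩
        exact ⟨_, ⟨σ ω, rfl⟩, rfl⟩)
  have hGB : ∀ k, ∫ ω in B, G k ω ∂P = ∫ ω in B, N (T + 1) ω ∂P := fun k =>
    setIntegral_condExp _ (hN.integrable _)
      (hσ.measurableSpace_mono (hτ k) (fun ω => WithTop.coe_le_coe.2 NNReal.le_dyadicCeil) _ hB)
  have hG : ∀ᵐ ω ∂P, Tendsto (fun k => G k ω) atTop (𝓝 (N (σ ω) ω)) := by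
    filter_upwards [ae_all_iff.2 hNτ] with ω hω
    exact (((hcont ω).tendsto _).comp (NNReal.tendsto_dyadicCeil _)).congr hω
  have hUI : UniformIntegrable G 1 P := (hN.integrable _).uniformIntegrable_condExp fun k =>
    (hτ k).measurableSpace_le_of_le (hτT k)
  have hNσ : Integrable (fun ω => N (σ ω) ω) P := hUI.integrable_of_ae_tendsto hG
  have hlim := tendsto_setIntegral_of_L1' _ hNσ.1
    (Eventually.of_forall fun k => integrable_condExp)
    (tendsto_Lp_finite_of_tendsto_ae le_rfl ENNReal.one_ne_top hUI.1
      (memLp_one_iff_integrable.2 hNσ) hUI.2.1 hG) B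
  rw [tendsto_nhds_unique hlim ((tendsto_congr hGB).2 tendsto_const_nhds)]
  exact (hN.setIntegral_eq le_self_add <| hσ.measurableSpace_le_of_le_const
    (fun ω => WithTop.coe_le_coe.2 (hσT ω)) _ hB).symm

theorem mul_measureReal_exists_le_inter (hN : Martingale N 𝒢 P)
    (hcont : ∀ ω, Continuous fun s => N s ω) (hnonneg : ∀ s ω, 0 ≤ N s ω)
    (hlim : ∀ᵐ ω ∂P, Tendsto (fun s => N s ω) atTop (𝓝 0)) {x : ℝ} {B : Set Ω}
    (hB : MeasurableSet[𝒢 0] B) (hBx : ∀ ω ∈ B, N 0 ω < x) :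
    x * P.real ({ω | ∃ s, x ≤ N s ω} ∩ B) = ∫ ω in B, N 0 ω ∂P := by
  set C := {ω | ∃ s, x ≤ N s ω}
  set σ : ℕ → Ω → ℝ≥0 := fun n => hittingBtwn N (Ici x) 0 n
  have hσ : ∀ n : ℕ, IsStoppingTime 𝒢 fun ω => (σ n ω : WithTop ℝ≥0) := fun n =>
    hN.1.isStoppingTime_hittingBtwn_Ici hcont hnonneg x n
  have hσn : ∀ n ω, σ n ω ≤ n := fun n => hittingBtwn_le
  have hint : ∀ n, ∫ ω in B, N (σ n ω) ω ∂P = ∫ ω in B, N 0 ω ∂P := fun n => by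
    rw [hN.setIntegral_stoppedValue_eq_of_continuous hcont (hσ n) (hσn n)
      ((hσ n).le_measurableSpace_of_const_le (fun ω => WithTop.coe_le_coe.2 zero_le) _ hB)]
    exact (hN.setIntegral_eq zero_le hB).symm
  have hmeas : ∀ n, AEStronglyMeasurable (fun ω => N (σ n ω) ω) (P.restrict B) := fun n =>
    ((stronglyMeasurable_stoppedValue_of_le (hN.1.isStronglyProgressive_of_continuous hcont)
      (hσ n) fun ω => WithTop.coe_le_coe.2 (hσn n ω)).mono (𝒢.le n)).aestronglyMeasurable
  have hbound : ∀ n, ∀ᵐ ω ∂(P.restrict B), ‖N (σ n ω) ω‖ ≤ x := fun n =>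
    ae_restrict_of_forall_mem (𝒢.le 0 _ hB) fun ω hω => by
      rw [Real.norm_of_nonneg (hnonneg _ _)]
      exact apply_hittingBtwn_Ici_le (hcont ω) zero_le (hBx ω hω).le
  have hlimit : ∀ᵐ ω ∂(P.restrict B),
      Tendsto (fun n => N (σ n ω) ω) atTop (𝓝 (C.indicator (fun _ => x) ω)) := by
    filter_upwards [ae_restrict_of_ae hlim, ae_restrict_mem (𝒢.le 0 _ hB)] with ω hω hωB
    exact tendsto_apply_hittingBtwn_Ici (hcont ω) (hBx ω hωB).le hω
  have hC : MeasurableSet C := hN.1.measurableSet_exists_le hcont hnonneg x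
  have hDCT := tendsto_integral_of_dominated_convergence _ hmeas (integrable_const x) hbound hlimit
  rw [tendsto_nhds_unique ((tendsto_congr hint).2 tendsto_const_nhds) hDCT,
    integral_indicator_const x hC, measureReal_restrict_apply hC, smul_eq_mul, mul_comm]

end

section

variable {Ω : Type*} {m : MeasurableSpace Ω} {P : Measure Ω} [IsFiniteMeasure P]
  {ℱ : Filtration ℝ≥0 m} {M : ℝ≥0 → Ω → ℝ}

theorem measureReal_exists_biSup_Icc_add_le_inter (hM : Martingale M ℱ P)
    (hcont : ∀ ω, Continuous fun s => M s ω) (hnonneg : ∀ s ω, 0 ≤ M s ω)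
    (hlim : ∀ᵐ ω ∂P, Tendsto (fun s => M s ω) atTop (𝓝 0)) (t : ℝ≥0) {ε : ℝ} (hε : 0 < ε)
    {B : Set Ω} (hB : MeasurableSet[ℱ t] B) :
    P.real ({ω | ∃ s, (⨆ r ∈ Icc 0 t, M r ω) + ε ≤ M s ω} ∩ B) =
      ∫ ω in B, M t ω / ((⨆ r ∈ Icc 0 t, M r ω) + ε) ∂P := by
  set S := fun ω => ⨆ r ∈ Icc 0 t, M r ω
  have hMS : ∀ ω, M t ω ≤ S ω := fun ω => le_biSup_Icc (hcont ω) (hnonneg · ω) ⟨zero_le, le_rfl⟩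
  have hSε : ∀ ω, 0 < S ω + ε := fun ω => by linarith [hnonneg t ω, hMS ω]
  have hY : StronglyMeasurable[ℱ.shift t 0] fun ω => (S ω + ε)⁻¹ := by
    rw [Filtration.shift_zero]
    exact (((hM.1.measurable_biSup_Icc hcont hnonneg 0 t).add_const ε).inv).stronglyMeasurable
  have hYε : ∀ ω, ‖(S ω + ε)⁻¹‖ ≤ ε⁻¹ := fun ω => by
    rw [norm_inv, Real.norm_of_nonneg (hSε ω).le]
    exact inv_anti₀ hε (by linarith [hnonneg t ω, hMS ω])
  have key := ((hM.shift t).mul_left_of_bounded hY hYε).mul_measureReal_exists_le_inter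
    (fun ω => continuous_const.mul ((hcont ω).comp (continuous_const_add t)))
    (fun s ω => mul_nonneg (inv_nonneg.2 (hSε ω).le) (hnonneg _ ω))
    (by
      filter_upwards [hlim] with ω hω
      simpa only [mul_zero, Function.comp_def, id] using
        (hω.comp (tendsto_atTop_mono (fun u => le_add_self) tendsto_id)).const_mul (S ω + ε)⁻¹)
    (x := 1) ((ℱ.shift_zero t).symm ▸ hB) (fun ω _ => by
      rw [add_zero, inv_mul_eq_div, div_lt_one (hSε ω)]
      exact (hMS ω).trans_lt (lt_add_of_pos_right _ hε))
  have hset : {ω | ∃ u, 1 ≤ M (t + u) ω / (S ω + ε)} = {ω | ∃ s, S ω + ε ≤ M s ω} := by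
    ext ω
    simp only [mem_ofPred_eq, one_le_div₀ (hSε ω)]
    refine ⟨fun ⟨u, hu⟩ => ⟨t + u, hu⟩, fun ⟨s, hs⟩ => ⟨s - t, ?_⟩⟩
    have hts : t ≤ s := by
      by_contra! hst
      linarith [le_biSup_Icc (hcont ω) (hnonneg · ω) ⟨zero_le, hst.le⟩]
    rwa [add_tsub_cancel_of_le hts]
  simp only [add_zero, one_mul, inv_mul_eq_div] at key
  rwa [hset] at key

theorem measureReal_exists_biSup_Icc_lt_inter (hM : Martingale M ℱ P)
    (hcont : ∀ ω, Continuous fun s => M s ω) (hnonneg : ∀ s ω, 0 ≤ M s ω)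
    (hlim : ∀ᵐ ω ∂P, Tendsto (fun s => M s ω) atTop (𝓝 0)) (t : ℝ≥0) {B : Set Ω}
    (hB : MeasurableSet[ℱ t] B) :
    P.real ({ω | ∃ s, (⨆ r ∈ Icc 0 t, M r ω) < M s ω} ∩ B) =
      ∫ ω in B, M t ω / ⨆ r ∈ Icc 0 t, M r ω ∂P := by
  set S := fun ω => ⨆ r ∈ Icc 0 t, M r ω
  set ε : ℕ → ℝ := fun k => 1 / (k + 1)
  set E : ℕ → Set Ω := fun k => {ω | ∃ s, S ω + ε k ≤ M s ω} ∩ B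
  have hMS : ∀ ω, M t ω ≤ S ω := fun ω => le_biSup_Icc (hcont ω) (hnonneg · ω) ⟨zero_le, le_rfl⟩
  have hSm : Measurable S := (hM.1.measurable_biSup_Icc hcont hnonneg 0 t).mono (ℱ.le t) le_rfl
  have hE : Monotone E := fun k l hkl => inter_subset_inter_left _ fun ω ⟨s, hs⟩ =>
    ⟨s, le_trans (add_le_add le_rfl (Nat.one_div_le_one_div hkl)) hs⟩
  have hEunion : ⋃ k, E k = {ω | ∃ s, S ω < M s ω} ∩ B := by
    ext ω
    simp only [E, mem_iUnion, mem_inter_iff, mem_ofPred_eq]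
    constructor
    · rintro ⟨k, ⟨s, hs⟩, hωB⟩
      exact ⟨⟨s, lt_of_lt_of_le (lt_add_of_pos_right _ Nat.one_div_pos_of_nat) hs⟩, hωB⟩
    · rintro ⟨⟨s, hs⟩, hωB⟩
      obtain ⟨k, hk⟩ := exists_nat_one_div_lt (sub_pos.2 hs)
      exact ⟨k, ⟨s, by simp only [ε]; linarith⟩, hωB⟩
  have hlimL : Tendsto (fun k => P.real (E k)) atTop (𝓝 (P.real (⋃ k, E k))) :=
    (ENNReal.tendsto_toReal (measure_ne_top _ _)).comp (tendsto_measure_iUnion_atTop hE)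
  have hlimR : Tendsto (fun k => ∫ ω in B, M t ω / (S ω + ε k) ∂P) atTop
      (𝓝 (∫ ω in B, M t ω / S ω ∂P)) :=
    tendsto_setIntegral_div_add_one_div ((hM.1 t).measurable.mono (ℱ.le t) le_rfl) hSm
      (hnonneg t) hMS B
  have hεk : ∀ k, P.real (E k) = ∫ ω in B, M t ω / (S ω + ε k) ∂P := fun k =>
    hM.measureReal_exists_biSup_Icc_add_le_inter hcont hnonneg hlim t Nat.one_div_pos_of_nat hB
  rw [← hEunion]
  exact tendsto_nhds_unique hlimL ((tendsto_congr hεk).2 hlimR)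

theorem condExp_indicator_compl_exists_biSup_Icc_lt (hM : Martingale M ℱ P)
    (hcont : ∀ ω, Continuous fun s => M s ω) (hnonneg : ∀ s ω, 0 ≤ M s ω)
    (hlim : ∀ᵐ ω ∂P, Tendsto (fun s => M s ω) atTop (𝓝 0)) (t : ℝ≥0) :
    P[{ω | ∃ s, (⨆ r ∈ Icc 0 t, M r ω) < M s ω}ᶜ.indicator fun _ => (1 : ℝ) | ℱ t] =ᵐ[P]
      fun ω => 1 - M t ω / ⨆ r ∈ Icc 0 t, M r ω := by
  set S := fun ω => ⨆ r ∈ Icc 0 t, M r ω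
  set D := {ω | ∃ s, S ω < M s ω}
  have hS : Measurable[ℱ t] S := hM.1.measurable_biSup_Icc hcont hnonneg 0 t
  have hMt : Measurable[ℱ t] (M t) := (hM.1 t).measurable
  have hD : MeasurableSet D := measurableSet_exists_lt_of_continuous (hS.mono (ℱ.le t) le_rfl)
    (fun s => (hM.1 s).measurable.mono (ℱ.le s) le_rfl) hcont
  have hratio : ∀ ω, ‖M t ω / S ω‖ ≤ 1 := fun ω => by
    have hMS := le_biSup_Icc (hcont ω) (hnonneg · ω) (⟨zero_le, le_rfl⟩ : t ∈ Icc 0 t)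
    rw [Real.norm_of_nonneg (div_nonneg (hnonneg t ω) ((hnonneg t ω).trans hMS))]
    exact div_le_one_of_le₀ hMS ((hnonneg t ω).trans hMS)
  have hint : Integrable (fun ω => M t ω / S ω) P :=
    .of_bound ((hMt.div hS).mono (ℱ.le t) le_rfl).aestronglyMeasurable 1 (ae_of_all _ hratio)
  refine condExp_indicator_ae_eq_of_measureReal_inter (ℱ.le t) hD.compl
    (measurable_const.sub (hMt.div hS)).stronglyMeasurable ((integrable_const 1).sub hint)
    fun B hB => ?_
  rw [integral_sub (integrable_const 1).integrableOn hint.integrableOn, setIntegral_const,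
    smul_eq_mul, mul_one, ← hM.measureReal_exists_biSup_Icc_lt_inter hcont hnonneg hlim t hB,
    inter_comm, ← sdiff_eq]
  have := measureReal_inter_add_sdiff (μ := P) (s := B) hD
  rw [inter_comm] at this
  change _ = _ - P.real (D ∩ B)
  linarith

end

end Martingale

end MeasureTheory

theorem conditional_atom_of_overall_maximum_general
    {Ω : Type*} {m : MeasurableSpace Ω} {P : Measure Ω} [IsProbabilityMeasure P]
    (ℱ : Filtration ℝ≥0 m) (M : ℝ≥0 → Ω → ℝ)
    (hMmart : Martingale M ℱ P)
    (hMnonneg : ∀ t ω, 0 ≤ M t ω)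
    (hMcont : ∀ ω, Continuous fun t => M t ω)
    (hMlim : ∀ᵐ ω ∂P, Tendsto (fun t => M t ω) atTop (nhds (0 : ℝ))) :
    ∀ t : ℝ≥0,
      P[Set.indicator {ω | (⨆ s, M s ω) = ⨆ s ∈ Set.Icc 0 t, M s ω} (fun _ => (1 : ℝ)) |
          ℱ t]
        =ᵐ[P] fun ω => 1 - M t ω / (⨆ s ∈ Set.Icc 0 t, M s ω) := by
  intro t
  refine (condExp_congr_ae (indicator_ae_eq_of_ae_eq_set ?_)).trans
    (hMmart.condExp_indicator_compl_exists_biSup_Icc_lt hMcont hMnonneg hMlim t)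
  filter_upwards [hMlim] with ω hω
  rw [eq_iff_iff]
  change _ ↔ ¬ ∃ s, _ < M s ω
  simp only [not_exists, not_lt]
  exact iSup_eq_biSup_Icc_iff (hMnonneg · ω) ((hMcont ω).bddAbove_range_of_tendsto_atTop hω) 0 t

/-- Let `M` be a nonnegative continuous martingale with `M 0 = 1` a.s. and
`M t → 0` a.s. as `t → ∞`. Then for every `t ≥ 0`, almost surely,
`P[M*_∞ = M*_t | 𝓕_t] = 1 − M t / M*_t`: the conditional law of the overall maximum
`M*_∞` given `𝓕_t` has an atom at the running maximum `M*_t` of mass `1 − M t / M*_t`. -/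
theorem conditional_atom_of_overall_maximum
    {Ω : Type*} {m : MeasurableSpace Ω} {P : Measure Ω} [IsProbabilityMeasure P]
    (ℱ : Filtration ℝ≥0 m) (M : ℝ≥0 → Ω → ℝ)
    (hMmart : Martingale M ℱ P)
    (hMnonneg : ∀ t ω, 0 ≤ M t ω)
    (hMcont : ∀ ω, Continuous fun t => M t ω)
    (hM0 : ∀ᵐ ω ∂P, M 0 ω = 1)
    (hMlim : ∀ᵐ ω ∂P, Tendsto (fun t => M t ω) atTop (nhds (0 : ℝ))) :
    ∀ t : ℝ≥0,
      P[Set.indicator {ω | (⨆ s, M s ω) = ⨆ s ∈ Set.Icc 0 t, M s ω} (fun _ => (1 : ℝ)) |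
          ℱ t]
        =ᵐ[P] fun ω => 1 - M t ω / (⨆ s ∈ Set.Icc 0 t, M s ω) :=
  conditional_atom_of_overall_maximum_general ℱ M hMmart hMnonneg hMcont hMlim
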